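/- arXiv:1409.0691 — 4 statements merged into one kernel-verified Lean document; each statement's English description precedes it below -/
import Mathlib

section
/- Let N be a squarefree positive integer with N ≡ 3 (mod 4), and let p be an odd prime not dividing N such that the Legendre symbol (-N/p) = -1. Then the following are equivalent: (i) (-p/q) = 1 for every prime q dividing N; (ii) (q/p) = 1 for every prime q ≡ 1 (mod 4) dividing N, and (-q₁/p) = (-q₂/p) for all primes q₁, q₂ ≡ 3 (mod 4) dividing N. -/
/-!
With `q* = χ₄(q) q`, quadratic reciprocity reads `(-p/q) = χ₄(q) (q*/p)`, and for squarefree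
`N ≡ 3 (mod 4)` one has `-N = ∏_{q ∣ N} q*`. So (i) says `(q/p) = 1` for `q ≡ 1` and
`(-q/p) = -1` for `q ≡ 3 (mod 4)`. Conversely, under (ii) the common value `ε` of `(-q/p)` over
the primes `q ≡ 3 (mod 4)` cannot be `1`, since then every factor of `(-N/p) = ∏ (q*/p)`
would be `1`; as `p ∤ N`, it is `-1`.
-/

open Finset ZMod

theorem Nat.mod_four_eq_one_or_three_of_dvd {q N : ℕ} (hN : N % 2 = 1) (hq : q ∣ N) :
    q % 4 = 1 ∨ q % 4 = 3 := by
  have : q % 2 = 1 := Nat.odd_iff.mp (Odd.of_dvd_nat (Nat.odd_iff.mpr hN) hq)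
  omega

theorem prod_primeFactors_χ₄_mul_self {N : ℕ} (hN : Squarefree N) :
    ∏ q ∈ N.primeFactors, χ₄ q * (q : ℤ) = χ₄ N * N := by
  rw [prod_mul_distrib, ← map_prod, ← Nat.cast_prod, ← Nat.cast_prod,
    Nat.prod_primeFactors_of_squarefree hN]

namespace legendreSym

variable {p q : ℕ} [Fact p.Prime] [Fact q.Prime]

theorem prod {ι : Type*} (s : Finset ι) (f : ι → ℤ) :
    legendreSym p (∏ i ∈ s, f i) = ∏ i ∈ s, legendreSym p (f i) :=
  map_prod (hom p) f s

theorem neg_eq_prod_primeFactors {N : ℕ} (hN : Squarefree N) (hN4 : N % 4 = 3) :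
    legendreSym p (-N) = ∏ q ∈ N.primeFactors, legendreSym p (χ₄ q * q) := by
  rw [← prod, prod_primeFactors_χ₄_mul_self hN, χ₄_nat_three_mod_four hN4, neg_one_mul]

theorem at_neg_of_mod_four_eq_one (hp : p ≠ 2) (hq : q % 4 = 1) :
    legendreSym q (-p) = legendreSym p q := by
  rw [at_neg (by omega), χ₄_nat_one_mod_four hq, one_mul,
    quadratic_reciprocity_one_mod_four hq hp]

theorem at_neg_of_mod_four_eq_three (hp : p ≠ 2) (hq : q % 4 = 3) :
    legendreSym q (-p) = -legendreSym p (-q) := by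
  rw [at_neg (by omega), at_neg hp, χ₄_nat_three_mod_four hq]
  have hp2 : p % 2 = 1 := (Nat.Prime.mod_two_eq_one_iff_ne_two Fact.out).mpr hp
  rcases (by omega : p % 4 = 1 ∨ p % 4 = 3) with hp4 | hp4
  · rw [χ₄_nat_one_mod_four hp4, quadratic_reciprocity_one_mod_four hp4 (by omega)]
    ring
  · rw [χ₄_nat_three_mod_four hp4, quadratic_reciprocity_three_mod_four hp4 hq]
    ring

theorem at_neg_eq_neg_one_of_forall_mod_four_eq_three {N q₀ : ℕ} (hN : Squarefree N)
    (hN4 : N % 4 = 3) (hpN : ¬ p ∣ N) (hleg : legendreSym p (-N) = -1)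
    (h1 : ∀ q : ℕ, q.Prime → q ∣ N → q % 4 = 1 → legendreSym p q = 1)
    (hq₀N : q₀ ∣ N)
    (h3 : ∀ q : ℕ, q.Prime → q ∣ N → q % 4 = 3 →
      legendreSym p (-q) = legendreSym p (-q₀)) :
    legendreSym p (-q₀) = -1 := by
  by_contra hne
  have hq₀ : ((-q₀ : ℤ) : ZMod p) ≠ 0 := by
    rw [Ne, intCast_zmod_eq_zero_iff_dvd, Int.dvd_neg, Int.natCast_dvd_natCast]
    exact fun hpq₀ => hpN (hpq₀.trans hq₀N)
  have hε : legendreSym p (-q₀) = 1 := (eq_one_or_neg_one p hq₀).resolve_right hne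
  suffices legendreSym p (-N) = 1 by rw [this] at hleg; norm_num at hleg
  rw [neg_eq_prod_primeFactors hN hN4]
  refine prod_eq_one fun q hq => ?_
  obtain ⟨hqp, hqN, -⟩ := Nat.mem_primeFactors.mp hq
  rcases Nat.mod_four_eq_one_or_three_of_dvd (by omega) hqN with hq1 | hq3
  · rw [χ₄_nat_one_mod_four hq1, one_mul, h1 q hqp hqN hq1]
  · rw [χ₄_nat_three_mod_four hq3, neg_one_mul, h3 q hqp hqN hq3, hε]

end legendreSym

open legendreSym in
theorem neg_p_residue_iff_genus_conditions_general (N p : ℕ) [Fact p.Prime] (hp2 : p % 2 = 1)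
    (hN : Squarefree N) (hN4 : N % 4 = 3) (hpN : ¬ p ∣ N)
    (hleg : legendreSym p (-(N : ℤ)) = -1) :
    (∀ q : ℕ, ∀ hq : q.Prime, q ∣ N →
        @legendreSym q ⟨hq⟩ (-(p : ℤ)) = 1) ↔
      ((∀ q : ℕ, q.Prime → q ∣ N → q % 4 = 1 → legendreSym p (q : ℤ) = 1) ∧
        (∀ q₁ q₂ : ℕ, q₁.Prime → q₂.Prime → q₁ ∣ N → q₂ ∣ N →
          q₁ % 4 = 3 → q₂ % 4 = 3 →
          legendreSym p (-(q₁ : ℤ)) = legendreSym p (-(q₂ : ℤ)))) := by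
  have hp : p ≠ 2 := by omega
  have hN2 : N % 2 = 1 := by omega
  constructor
  · intro h
    refine ⟨fun q hq hqN hq1 => ?_, fun q₁ q₂ hq₁ hq₂ hqN₁ hqN₂ hq₁3 hq₂3 => ?_⟩
    · have := Fact.mk hq
      rw [← at_neg_of_mod_four_eq_one hp hq1, h q hq hqN]
    · have := Fact.mk hq₁
      have := Fact.mk hq₂
      linarith [at_neg_of_mod_four_eq_three hp hq₁3, at_neg_of_mod_four_eq_three hp hq₂3,
        h q₁ hq₁ hqN₁, h q₂ hq₂ hqN₂]
  · rintro ⟨h1, h3⟩ q hq hqN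
    have := Fact.mk hq
    rcases Nat.mod_four_eq_one_or_three_of_dvd hN2 hqN with hq1 | hq3
    · rw [at_neg_of_mod_four_eq_one hp hq1, h1 q hq hqN hq1]
    · have hε := at_neg_eq_neg_one_of_forall_mod_four_eq_three hN hN4 hpN hleg h1 hqN
        fun q' hq' hq'N hq'3 => h3 q' q hq' hq hq'N hqN hq'3 hq3
      rw [at_neg_of_mod_four_eq_three hp hq3, hε, neg_neg]

/-- Let `N` be a squarefree positive integer with `N ≡ 3 (mod 4)`, and let `p` be an odd prime
not dividing `N` such that the Legendre symbol `(-N/p) = -1`. Then the following are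
equivalent: (i) `(-p/q) = 1` for every prime `q` dividing `N`; (ii) `(q/p) = 1` for every
prime `q ≡ 1 (mod 4)` dividing `N`, and `(-q₁/p) = (-q₂/p)` for all primes
`q₁, q₂ ≡ 3 (mod 4)` dividing `N`. -/
theorem neg_p_residue_iff_genus_conditions (N p : ℕ) [Fact p.Prime] (hp2 : p % 2 = 1)
    (hN : Squarefree N) (hNpos : 0 < N) (hN4 : N % 4 = 3) (hpN : ¬ p ∣ N)
    (hleg : legendreSym p (-(N : ℤ)) = -1) :
    (∀ q : ℕ, ∀ hq : q.Prime, q ∣ N →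
        @legendreSym q ⟨hq⟩ (-(p : ℤ)) = 1) ↔
      ((∀ q : ℕ, q.Prime → q ∣ N → q % 4 = 1 → legendreSym p (q : ℤ) = 1) ∧
        (∀ q₁ q₂ : ℕ, q₁.Prime → q₂.Prime → q₁ ∣ N → q₂ ∣ N →
          q₁ % 4 = 3 → q₂ % 4 = 3 →
          legendreSym p (-(q₁ : ℤ)) = legendreSym p (-(q₂ : ℤ)))) :=
  neg_p_residue_iff_genus_conditions_general N p hp2 hN hN4 hpN hleg
end

section
/- Let N be a squarefree positive integer with N ≡ 1 (mod 4), and let p be an odd prime not dividing N such that the Legendre symbol (-N/p) = -1. Then (-p/q) = 1 for every prime q dividing N if and only if p ≡ 3 (mod 4) and (q/p) = 1 for every prime q dividing N. -/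
/-!
By quadratic reciprocity, for an odd prime `q` one has `(-p/q) = (q/p)` when `p ≡ 3 (mod 4)`
and `(-p/q) = χ₄(q) (q/p)` when `p ≡ 1 (mod 4)`. The first case gives the equivalence outright.
In the second, `(-p/q) = 1` for all `q ∣ N` would force `(q/p) = χ₄(q)` for all `q ∣ N`, hence,
both sides being multiplicative in `q`, `(N/p) = χ₄(N) = 1` and `(-N/p) = χ₄(p) = 1`,
contradicting `(-N/p) = -1`.
-/

open ZMod

theorem MonoidHom.eq_of_forall_prime_dvd {M : Type*} [Monoid M] (f g : ℕ →* M) {n : ℕ}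
    (hn : n ≠ 0) (h : ∀ q, q.Prime → q ∣ n → f q = g q) : f n = g n := by
  induction n using induction_on_primes with
  | zero => exact absurd rfl hn
  | one => simp only [map_one]
  | prime_mul q a hq ih =>
    have ha : a ≠ 0 := right_ne_zero_of_mul hn
    rw [map_mul, map_mul, h q hq (dvd_mul_right q a),
      ih ha fun r hr hra => h r hr (hra.mul_left q)]

theorem legendreSym_neg_of_mod_four_eq_one {p q : ℕ} [Fact p.Prime] [Fact q.Prime]
    (hp : p % 4 = 1) (hq : q ≠ 2) : legendreSym q (-p) = χ₄ q * legendreSym p q := by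
  rw [neg_eq_neg_one_mul, legendreSym.mul, legendreSym.at_neg_one hq,
    legendreSym.quadratic_reciprocity_one_mod_four hp hq]

theorem legendreSym_neg_of_mod_four_eq_three {p q : ℕ} [Fact p.Prime] [Fact q.Prime]
    (hp : p % 4 = 3) (hq : q ≠ 2) : legendreSym q (-p) = legendreSym p q := by
  rw [neg_eq_neg_one_mul, legendreSym.mul, legendreSym.at_neg_one hq]
  rcases Nat.odd_mod_four_iff.mp (Nat.odd_iff.mp ((Fact.out : q.Prime).odd_of_ne_two hq)) with
    hq4 | hq4
  · rw [χ₄_nat_one_mod_four hq4, one_mul, legendreSym.quadratic_reciprocity_one_mod_four hq4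
      (by omega)]
  · rw [χ₄_nat_three_mod_four hq4, legendreSym.quadratic_reciprocity_three_mod_four hp hq4,
      neg_one_mul, neg_neg]

theorem legendreSym_nat_eq_χ₄_of_forall_prime_dvd {p n : ℕ} [Fact p.Prime] (hn : n ≠ 0)
    (h : ∀ q, q.Prime → q ∣ n → legendreSym p q = χ₄ q) : legendreSym p n = χ₄ n :=
  ((legendreSym.hom p : ℤ →* ℤ).comp (Nat.castRingHom ℤ)).eq_of_forall_prime_dvd
    ((χ₄ : ZMod 4 →* ℤ).comp (Nat.castRingHom (ZMod 4))) hn h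

theorem legendreSym_neg_nat_eq_one_of_mod_four_eq_one {p N : ℕ} [Fact p.Prime] (hp : p % 4 = 1)
    (hN : N % 4 = 1) (h : ∀ q : ℕ, ∀ hq : q.Prime, q ∣ N → @legendreSym q ⟨hq⟩ (-p) = 1) :
    legendreSym p (-N) = 1 := by
  have hNp : legendreSym p N = χ₄ N := by
    refine legendreSym_nat_eq_χ₄_of_forall_prime_dvd (by omega) fun q hq hqN => ?_
    have := Fact.mk hq
    have hq2 : q ≠ 2 := by rintro rfl; omega
    have hpq := h q hq hqN
    rw [legendreSym_neg_of_mod_four_eq_one hp hq2] at hpq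
    exact (Int.eq_of_mul_eq_one hpq).symm
  rw [neg_eq_neg_one_mul, legendreSym.mul, legendreSym.at_neg_one (by omega), hNp,
    χ₄_nat_one_mod_four hp, χ₄_nat_one_mod_four hN, one_mul]

theorem neg_p_residue_iff_p_three_mod_four_general (N p : ℕ) [Fact p.Prime] (hp2 : p % 2 = 1)
    (hN4 : N % 4 = 1) (hleg : legendreSym p (-(N : ℤ)) = -1) :
    (∀ q : ℕ, ∀ hq : q.Prime, q ∣ N → @legendreSym q ⟨hq⟩ (-(p : ℤ)) = 1) ↔
      (p % 4 = 3 ∧ ∀ q : ℕ, q.Prime → q ∣ N → legendreSym p (q : ℤ) = 1) := by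
  have hq2 : ∀ q, q ∣ N → q ≠ 2 := by rintro q hqN rfl; omega
  have neg_p_eq (hp4 : p % 4 = 3) (q : ℕ) (hq : q.Prime) (hqN : q ∣ N) :
      @legendreSym q ⟨hq⟩ (-p) = legendreSym p q :=
    @legendreSym_neg_of_mod_four_eq_three p q _ ⟨hq⟩ hp4 (hq2 q hqN)
  constructor
  · intro h
    have hp4 : p % 4 = 3 := by
      rcases Nat.odd_mod_four_iff.mp hp2 with hp4 | hp4
      · exact absurd (hleg.symm.trans (legendreSym_neg_nat_eq_one_of_mod_four_eq_one hp4 hN4 h))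
          (by decide)
      · exact hp4
    exact ⟨hp4, fun q hq hqN => neg_p_eq hp4 q hq hqN ▸ h q hq hqN⟩
  · rintro ⟨hp4, h⟩ q hq hqN
    exact (neg_p_eq hp4 q hq hqN).trans (h q hq hqN)

/-- Let `N` be a squarefree positive integer with `N ≡ 1 (mod 4)`, and let `p` be an odd prime
not dividing `N` such that the Legendre symbol `(-N/p) = -1`. Then `(-p/q) = 1` for every
prime `q` dividing `N` if and only if `p ≡ 3 (mod 4)` and `(q/p) = 1` for every prime `q`
dividing `N`. -/
theorem neg_p_residue_iff_p_three_mod_four (N p : ℕ) [Fact p.Prime] (hp2 : p % 2 = 1)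
    (hN : Squarefree N) (hNpos : 0 < N) (hN4 : N % 4 = 1) (hpN : ¬ p ∣ N)
    (hleg : legendreSym p (-(N : ℤ)) = -1) :
    (∀ q : ℕ, ∀ hq : q.Prime, q ∣ N → @legendreSym q ⟨hq⟩ (-(p : ℤ)) = 1) ↔
      (p % 4 = 3 ∧ ∀ q : ℕ, q.Prime → q ∣ N → legendreSym p (q : ℤ) = 1) :=
  neg_p_residue_iff_p_three_mod_four_general N p hp2 hN4 hleg
end

section
/- Let N be a squarefree positive integer with N ≡ 2 (mod 8), and let p be an odd prime not dividing N such that the Legendre symbol (-N/p) = -1. If (-p/q) = 1 for every odd prime q dividing N, then (-2/p) = -1. -/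
open ZMod

lemma legendreSym_aux (p : ℕ) [Fact p.Prime] (hp2 : p % 2 = 1) :
    ∀ M : ℕ, Squarefree M → M % 2 = 1 →
    (∀ q : ℕ, ∀ hq : q.Prime, q % 2 = 1 → q ∣ M → @legendreSym q ⟨hq⟩ (-(p : ℤ)) = 1) →
    legendreSym p (M : ℤ) = χ₄ M ^ (p / 2 + 1) := by
  intro M
  induction M using Nat.strong_induction_on with
  | _ M ih =>
    intro hsf hM2 h
    rcases eq_or_ne M 1 with rfl | hM1
    · simp
    · obtain ⟨q, hq, hqd⟩ := Nat.exists_prime_and_dvd hM1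
      obtain ⟨M', rfl⟩ := hqd
      haveI : Fact q.Prime := ⟨hq⟩
      have hq2 : q % 2 = 1 := by
        rcases Nat.mod_two_eq_zero_or_one q with h0 | h1
        · exfalso
          have : (2 : ℕ) ∣ q * M' := dvd_mul_of_dvd_left (Nat.dvd_of_mod_eq_zero h0) _
          omega
        · exact h1
      have hqne2 : q ≠ 2 := by omega
      have hpne2 : p ≠ 2 := by omega
      have hM'2 : M' % 2 = 1 := by
        rcases Nat.mod_two_eq_zero_or_one M' with h0 | h1
        · exfalso
          have : (2 : ℕ) ∣ q * M' := dvd_mul_of_dvd_right (Nat.dvd_of_mod_eq_zero h0) _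
          omega
        · exact h1
      have hM'sf : Squarefree M' := hsf.squarefree_of_dvd (dvd_mul_left _ _)
      have hM'pos : 0 < M' := Nat.pos_of_ne_zero (by rintro rfl; simp at hM'2)
      have hlt : M' < q * M' := by
        have : 2 ≤ q := hq.two_le
        calc M' = 1 * M' := (one_mul M').symm
        _ < q * M' := by
          apply Nat.mul_lt_mul_of_lt_of_le <;> omega
      have hM' : legendreSym p (M' : ℤ) = χ₄ M' ^ (p / 2 + 1) :=
        ih M' hlt hM'sf hM'2 (fun r hr hr2 hrd => h r hr hr2 (hrd.mul_left _))
      -- compute legendreSym q p from the hypothesis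
      have hq1 : legendreSym q (-(p : ℤ)) = 1 := h q hq hq2 (Dvd.intro M' rfl)
      have hqp : legendreSym q (p : ℤ) = (-1) ^ (q / 2) := by
        have := legendreSym.mul q (-1) (p : ℤ)
        rw [neg_one_mul] at this
        rw [hq1, legendreSym.at_neg_one hqne2, χ₄_eq_neg_one_pow hq2] at this
        have h2 : ((-1 : ℤ) ^ (q / 2)) * 1 = (-1) ^ (q / 2) * ((-1 : ℤ) ^ (q / 2) * legendreSym q (p : ℤ)) := by
          rw [← this]
        rw [← mul_assoc, ← pow_add, ← two_mul, pow_mul] at h2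
        simpa using h2.symm
      have hpq : legendreSym p (q : ℤ) = ((-1 : ℤ) ^ (q / 2)) ^ (p / 2 + 1) := by
        rw [legendreSym.quadratic_reciprocity' hqne2 hpne2, hqp, ← pow_mul,
          mul_add, mul_one, pow_add]
      push_cast
      rw [legendreSym.mul, hpq, hM', map_mul, mul_pow, χ₄_eq_neg_one_pow hq2]

/-- Let `N` be a squarefree positive integer with `N ≡ 2 (mod 8)`, and let `p` be an odd prime
not dividing `N` such that the Legendre symbol `(-N/p) = -1`. If `(-p/q) = 1` for every odd
prime `q` dividing `N`, then `(-2/p) = -1`. -/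
theorem legendreSym_neg_two_eq_neg_one (N p : ℕ) [Fact p.Prime] (hp2 : p % 2 = 1)
    (hN : Squarefree N) (hNpos : 0 < N) (hN8 : N % 8 = 2) (hpN : ¬ p ∣ N)
    (hleg : legendreSym p (-(N : ℤ)) = -1)
    (h : ∀ q : ℕ, ∀ hq : q.Prime, q % 2 = 1 → q ∣ N → @legendreSym q ⟨hq⟩ (-(p : ℤ)) = 1) :
    legendreSym p (-2) = -1 := by
  obtain ⟨M, rfl⟩ : 2 ∣ N := Nat.dvd_of_mod_eq_zero (by omega)
  have h4 : ¬ (2 * 2 ∣ 2 * M) := fun hd => by simpa [Nat.isUnit_iff] using hN 2 hd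
  have hM2 : M % 2 = 1 := by
    rcases Nat.mod_two_eq_zero_or_one M with h0 | h1
    · exact absurd (mul_dvd_mul_left 2 (Nat.dvd_of_mod_eq_zero h0)) h4
    · exact h1
  have hM4 : M % 4 = 1 := by omega
  have hMsf : Squarefree M := hN.squarefree_of_dvd (dvd_mul_left _ _)
  have hM : legendreSym p (M : ℤ) = 1 := by
    rw [legendreSym_aux p hp2 M hMsf hM2
      (fun r hr hr2 hrd => h r hr hr2 (hrd.mul_left _)), χ₄_nat_one_mod_four hM4, one_pow]
  have key : -((2 * M : ℕ) : ℤ) = -2 * (M : ℤ) := by push_cast; ring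
  rw [key, legendreSym.mul, hM, mul_one] at hleg
  exact hleg
end

section
/- Let N be a squarefree positive integer with N ≡ 6 (mod 8), and let p be an odd prime not dividing N such that the Legendre symbol (-N/p) = -1. If (-p/q) = 1 for every odd prime q dividing N, then (2/p) = 1, i.e., p ≡ ±1 (mod 8). -/
open ZMod

private lemma neg_one_pow_half_mul {a b : ℕ} (ha : a % 2 = 1) (hb : b % 2 = 1) :
    ((-1 : ℤ)) ^ ((a * b) / 2) = (-1) ^ (a / 2) * (-1) ^ (b / 2) := by
  have hab : (a * b) % 2 = 1 := by rw [Nat.mul_mod, ha, hb]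
  have h1 : (χ₄ ((a * b : ℕ)) : ℤ) = χ₄ (a : ZMod 4) * χ₄ (b : ZMod 4) := by
    rw [Nat.cast_mul, map_mul]
  rwa [χ₄_eq_neg_one_pow hab, χ₄_eq_neg_one_pow ha, χ₄_eq_neg_one_pow hb] at h1

private lemma aux_legendre (N p : ℕ) [Fact p.Prime] (hp2 : p % 2 = 1) (hpN : ¬ p ∣ N)
    (h : ∀ q : ℕ, ∀ hq : q.Prime, q % 2 = 1 → q ∣ N → @legendreSym q ⟨hq⟩ (-(p : ℤ)) = 1) :
    ∀ M : ℕ, M ∣ N → M % 2 = 1 → legendreSym p (M : ℤ) = (((-1 : ℤ)) ^ (M / 2)) ^ (p / 2 + 1) := by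
  have hpne2 : p ≠ 2 := by omega
  intro M
  induction M using Nat.strong_induction_on with
  | _ M ih =>
    intro hMN hModd
    rcases eq_or_ne M 1 with rfl | hM1
    · simp
    · have hMpos : 0 < M := by omega
      set q := M.minFac with hqdef
      have hq : q.Prime := Nat.minFac_prime hM1
      haveI : Fact q.Prime := ⟨hq⟩
      have hqdvd : q ∣ M := Nat.minFac_dvd M
      have h2M : ¬ (2 ∣ M) := by omega
      have hqne2 : q ≠ 2 := fun h2 => h2M (h2 ▸ hqdvd)
      have hqodd : q % 2 = 1 := (Nat.Prime.eq_two_or_odd hq).resolve_left hqne2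
      obtain ⟨M', hM'⟩ := hqdvd
      have hM'dvdM : M' ∣ M := ⟨q, by rw [hM']; ring⟩
      have hM'odd : M' % 2 = 1 := by
        rcases Nat.even_or_odd M' with he | ho
        · exact absurd (he.two_dvd.trans hM'dvdM) h2M
        · exact Nat.odd_iff.mp ho
      have hM'lt : M' < M := by
        have hq1 : 1 < q := hq.one_lt
        nlinarith [Nat.one_le_iff_ne_zero.mpr (show M' ≠ 0 by omega)]
      have hM'dvd : M' ∣ N := dvd_trans ⟨q, by rw [hM']; ring⟩ hMN
      have hqN : q ∣ N := dvd_trans (Nat.minFac_dvd M) hMN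
      have hpq : p ≠ q := fun he => hpN (he ▸ hqN)
      -- compute legendreSym q p
      have h1 := h q hq hqodd hqN
      have h2 : legendreSym q (-1 : ℤ) * legendreSym q (p : ℤ) = 1 := by
        rw [← legendreSym.mul, neg_one_mul]; exact h1
      rw [legendreSym.at_neg_one hqne2, χ₄_eq_neg_one_pow hqodd] at h2
      have h3 : legendreSym q (p : ℤ) = (-1) ^ (q / 2) := by
        have := congrArg (fun x => ((-1 : ℤ)) ^ (q / 2) * x) h2
        simp only [mul_one] at this
        rw [← mul_assoc, ← pow_add] at this
        rw [← this, Even.neg_one_pow ⟨q / 2, by ring⟩, one_mul]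
      -- reciprocity
      have h4 : legendreSym p (q : ℤ) = (-1) ^ (q / 2 * (p / 2)) * legendreSym q (p : ℤ) :=
        legendreSym.quadratic_reciprocity' hqne2 hpne2
      have h5 : legendreSym p (q : ℤ) = (((-1 : ℤ)) ^ (q / 2)) ^ (p / 2 + 1) := by
        rw [h4, h3, ← pow_add, ← pow_mul]
        congr 1
      -- combine
      have h6 := ih M' hM'lt hM'dvd hM'odd
      calc legendreSym p (M : ℤ) = legendreSym p ((q : ℤ) * (M' : ℤ)) := by
            rw [hM']; push_cast; ring_nf
        _ = legendreSym p (q : ℤ) * legendreSym p (M' : ℤ) := legendreSym.mul p _ _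
        _ = (((-1 : ℤ)) ^ (q / 2)) ^ (p / 2 + 1) * (((-1 : ℤ)) ^ (M' / 2)) ^ (p / 2 + 1) := by
            rw [h5, h6]
        _ = (((-1 : ℤ)) ^ (M / 2)) ^ (p / 2 + 1) := by
            rw [← mul_pow, ← neg_one_pow_half_mul hqodd hM'odd, ← hM']

/-- Let `N` be a squarefree positive integer with `N ≡ 6 (mod 8)`, and let `p` be an odd prime
not dividing `N` such that the Legendre symbol `(-N/p) = -1`. If `(-p/q) = 1` for every odd
prime `q` dividing `N`, then `(2/p) = 1`, i.e., `p ≡ ±1 (mod 8)`. -/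
theorem legendreSym_two_eq_one (N p : ℕ) [Fact p.Prime] (hp2 : p % 2 = 1)
    (hN : Squarefree N) (hNpos : 0 < N) (hN8 : N % 8 = 6) (hpN : ¬ p ∣ N)
    (hleg : legendreSym p (-(N : ℤ)) = -1)
    (h : ∀ q : ℕ, ∀ hq : q.Prime, q % 2 = 1 → q ∣ N → @legendreSym q ⟨hq⟩ (-(p : ℤ)) = 1) :
    legendreSym p 2 = 1 ∧ (p % 8 = 1 ∨ p % 8 = 7) := by
  have hpne2 : p ≠ 2 := by omega
  set M := N / 2 with hMdef
  have hNM : N = 2 * M := by omega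
  have hModd : M % 2 = 1 := by omega
  have hMdvd : M ∣ N := ⟨2, by omega⟩
  have hM4 : M % 4 = 3 := by omega
  have hM2odd : (M / 2) % 2 = 1 := by omega
  have hMleg : legendreSym p (M : ℤ) = (((-1 : ℤ)) ^ (M / 2)) ^ (p / 2 + 1) :=
    aux_legendre N p hp2 hpN h M hMdvd hModd
  have hMneg : ((-1 : ℤ)) ^ (M / 2) = -1 := Odd.neg_one_pow (Nat.odd_iff.mpr hM2odd)
  rw [hMneg] at hMleg
  -- expand legendreSym p (-N)
  have hsplit : legendreSym p (-(N : ℤ)) =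
      legendreSym p (-1) * legendreSym p 2 * legendreSym p (M : ℤ) := by
    rw [← legendreSym.mul, ← legendreSym.mul]
    congr 1
    push_cast [hNM]; ring
  rw [hsplit, legendreSym.at_neg_one hpne2, χ₄_eq_neg_one_pow hp2, hMleg] at hleg
  have hprod : ((-1 : ℤ)) ^ (p / 2) * ((-1 : ℤ)) ^ (p / 2 + 1) = -1 := by
    rw [← pow_add]
    exact Odd.neg_one_pow ⟨p / 2, by ring⟩
  have h2 : legendreSym p 2 = 1 := by
    have key : (-1 : ℤ) * legendreSym p 2 = -1 := by
      calc (-1 : ℤ) * legendreSym p 2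
          = (-1) ^ (p / 2) * (-1) ^ (p / 2 + 1) * legendreSym p 2 := by rw [hprod]
        _ = (-1) ^ (p / 2) * legendreSym p 2 * (-1) ^ (p / 2 + 1) := by ring
        _ = -1 := hleg
    linarith
  refine ⟨h2, ?_⟩
  have h8 : (χ₈ (p : ZMod 8) : ℤ) = 1 := by
    rw [← legendreSym.at_two hpne2]; exact h2
  rw [χ₈_nat_eq_if_mod_eight] at h8
  by_contra hcon
  push_neg at hcon
  rw [if_neg (by omega : ¬ p % 2 = 0), if_neg (by tauto)] at h8
  norm_num at h8
end
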